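/- Let X be a solution of the inviscid dyadic model on [0,T) with X(0) ∈ H_+, i.e. X_n(0) < 0 for at most finitely many n. Then X is a Leray-Hopf solution: its energy E satisfies E(t) ≤ E(s) for all 0 ≤ s < t < T. -/

import Mathlib

open MeasureTheory Set Filter Topology

/-- `X` is a solution of the inviscid dyadic model on the time set `D`
(typically `Set.Ico 0 T` or `Set.Ici 0`), with coefficients `k` bounded by `C * 2 ^ n`.
The components of the solution are `X 1, X 2, ...`; by convention `X 0 ≡ 0` and `k 0 = 0`. -/
def IsDyadicSolutionOn (C : ℝ) (k : ℕ → ℝ) (X : ℕ → ℝ → ℝ) (D : Set ℝ) : Prop :=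
  0 < C ∧ k 0 = 0 ∧
  (∀ n : ℕ, 1 ≤ n → 0 ≤ k n ∧ k n ≤ C * 2 ^ n) ∧
  (∀ t : ℝ, X 0 t = 0) ∧
  (∀ n : ℕ, 1 ≤ n → ∀ t ∈ D, HasDerivWithinAt (X n)
      (k (n - 1) * X (n - 1) t ^ 2 - k n * X n t * X (n + 1) t) D t) ∧
  (∀ t ∈ D, Summable fun j : ℕ => X (j + 1) t ^ 2)

/-- The energy `E(t) = ∑_{j ≥ 1} X_j(t)^2`. -/
noncomputable def energy (X : ℕ → ℝ → ℝ) (t : ℝ) : ℝ :=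
  ∑' j : ℕ, X (j + 1) t ^ 2

/-- The function `a(t) = sup_{n ≥ 1} (- k_n X_{n+1}(t))`. -/
noncomputable def classKfun (k : ℕ → ℝ) (X : ℕ → ℝ → ℝ) (t : ℝ) : ℝ :=
  ⨆ n : ℕ, -(k (n + 1) * X (n + 2) t)

/-- A solution is of class `K` if `a(t) = sup_{n ≥ 1} (- k_n X_{n+1}(t))` is locally
integrable on `[0,∞)`. -/
def IsClassK (k : ℕ → ℝ) (X : ℕ → ℝ → ℝ) : Prop :=
  LocallyIntegrableOn (classKfun k X) (Set.Ici 0)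

/-!
Each component obeys `X_n' + k_n X_{n+1} X_n = k_{n-1} X_{n-1}^2 ≥ 0`, so with the integrating
factor `exp ∫ k_n X_{n+1}` one sees that a component which starts nonnegative stays nonnegative.
For initial data in `H₊` this makes all `X_n` with `n ≥ M` nonnegative for all times. The energy
of the first `N` modes has derivative `-2 k_N X_N² X_{N+1}`, the flux through the `N`-th shell,
which is therefore `≤ 0` for `N ≥ M`; these truncated energies decrease and so does their limit.
-/

theorem nonneg_of_hasDerivWithinAt_add_mul_nonneg {f f' q : ℝ → ℝ} {a b : ℝ} (hab : a ≤ b)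
    (hq : ContinuousOn q (Icc a b))
    (hf : ∀ x ∈ Icc a b, HasDerivWithinAt f (f' x) (Icc a b) x)
    (hf' : ∀ x ∈ Ioo a b, 0 ≤ f' x + q x * f x) (ha : 0 ≤ f a) : 0 ≤ f b := by
  set F : ℝ → ℝ := fun x => ∫ y in a..x, q y
  have hF : ContinuousOn F (Icc a b) := by
    simpa only [uIcc_of_le hab] using intervalIntegral.continuousOn_primitive_interval'
      (hq.intervalIntegrable_of_Icc hab) left_mem_uIcc
  have hF' : ∀ x ∈ Ioo a b, HasDerivAt F (q x) x := fun x hx =>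
    intervalIntegral.integral_hasDerivAt_right
      ((hq.mono (Icc_subset_Icc_right hx.2.le)).intervalIntegrable_of_Icc hx.1.le)
      ((hq.mono Ioo_subset_Icc_self).stronglyMeasurableAtFilter isOpen_Ioo x hx)
      (hq.continuousAt (Icc_mem_nhds hx.1 hx.2))
  have hmono : MonotoneOn (fun x => f x * Real.exp (F x)) (Icc a b) := by
    refine monotoneOn_of_hasDerivWithinAt_nonneg
      (f' := fun x => (f' x + q x * f x) * Real.exp (F x)) (convex_Icc a b) (fun x hx => (hf x hx).continuousWithinAt.mul (hF x hx).rexp) ?_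
      fun x hx => ?_
    · intro x hx
      rw [interior_Icc] at hx ⊢
      refine (((hf x (Ioo_subset_Icc_self hx)).mono Ioo_subset_Icc_self).mul
        (hF' x hx).exp.hasDerivWithinAt).congr_deriv ?_
      ring
    · rw [interior_Icc] at hx
      exact mul_nonneg (hf' x hx) (Real.exp_pos _).le
  have hfab : f a * Real.exp (F a) ≤ f b * Real.exp (F b) :=
    hmono (left_mem_Icc.2 hab) (right_mem_Icc.2 hab) hab
  rw [show F a = 0 from intervalIntegral.integral_same, Real.exp_zero, mul_one] at hfab
  have hb : 0 ≤ f b * Real.exp (F b) := ha.trans hfab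
  exact nonneg_of_mul_nonneg_left hb (Real.exp_pos _)

noncomputable def partialEnergy (X : ℕ → ℝ → ℝ) (N : ℕ) (t : ℝ) : ℝ :=
  ∑ i ∈ Finset.range N, X (i + 1) t ^ 2

namespace IsDyadicSolutionOn

variable {C : ℝ} {k : ℕ → ℝ} {X : ℕ → ℝ → ℝ} {D : Set ℝ}

theorem coeff_nonneg (hX : IsDyadicSolutionOn C k X D) (n : ℕ) : 0 ≤ k n := by
  obtain ⟨-, hk0, hk, -⟩ := hX
  rcases n.eq_zero_or_pos with rfl | hn
  · exact hk0.ge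
  · exact (hk n hn).1

theorem hasDerivWithinAt (hX : IsDyadicSolutionOn C k X D) {n : ℕ} (hn : 1 ≤ n) {t : ℝ}
    (ht : t ∈ D) :
    HasDerivWithinAt (X n) (k (n - 1) * X (n - 1) t ^ 2 - k n * X n t * X (n + 1) t) D t :=
  hX.2.2.2.2.1 n hn t ht

theorem continuousOn (hX : IsDyadicSolutionOn C k X D) {n : ℕ} (hn : 1 ≤ n) :
    ContinuousOn (X n) D :=
  fun _ ht => (hX.hasDerivWithinAt hn ht).continuousWithinAt

theorem hasDerivWithinAt_partialEnergy (hX : IsDyadicSolutionOn C k X D) (N : ℕ) {t : ℝ}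
    (ht : t ∈ D) :
    HasDerivWithinAt (partialEnergy X N) (-(2 * k N * X N t ^ 2 * X (N + 1) t)) D t := by
  set flux : ℕ → ℝ := fun i => 2 * k i * X i t ^ 2 * X (i + 1) t
  have hsum : HasDerivWithinAt (partialEnergy X N)
      (∑ i ∈ Finset.range N, (flux i - flux (i + 1))) D t := by
    refine HasDerivWithinAt.fun_sum fun i _ => ?_
    refine ((hX.hasDerivWithinAt (Nat.le_add_left 1 i) ht).fun_pow 2).congr_deriv ?_
    simp only [flux, Nat.add_sub_cancel]
    ring
  have hflux0 : flux 0 = 0 := by simp [flux, hX.2.1]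
  rwa [Finset.sum_range_sub', hflux0, zero_sub] at hsum

theorem antitoneOn_partialEnergy (hX : IsDyadicSolutionOn C k X D) (hD : Convex ℝ D) {N : ℕ}
    (hpos : ∀ t ∈ D, 0 ≤ X (N + 1) t) : AntitoneOn (partialEnergy X N) D :=
  antitoneOn_of_hasDerivWithinAt_nonpos hD
    (fun _ ht => (hX.hasDerivWithinAt_partialEnergy N ht).continuousWithinAt)
    (fun _ ht => (hX.hasDerivWithinAt_partialEnergy N (interior_subset ht)).mono interior_subset)
    fun t ht => neg_nonpos.2 <| mul_nonneg
      (mul_nonneg (mul_nonneg zero_le_two (hX.coeff_nonneg N)) (sq_nonneg _))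
      (hpos t (interior_subset ht))

theorem tendsto_partialEnergy (hX : IsDyadicSolutionOn C k X D) {t : ℝ} (ht : t ∈ D) :
    Tendsto (fun N => partialEnergy X N t) atTop (𝓝 (energy X t)) :=
  (hX.2.2.2.2.2 t ht).hasSum.tendsto_sum_nat

theorem antitoneOn_energy (hX : IsDyadicSolutionOn C k X D) (hD : Convex ℝ D)
    (hpos : ∀ᶠ n in atTop, ∀ t ∈ D, 0 ≤ X n t) : AntitoneOn (energy X) D := by
  intro s hs t ht hst
  refine le_of_tendsto_of_tendsto (hX.tendsto_partialEnergy ht) (hX.tendsto_partialEnergy hs) ?_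
  filter_upwards [(tendsto_add_atTop_nat 1).eventually hpos] with N hN
  exact hX.antitoneOn_partialEnergy hD hN hs ht hst

theorem nonneg_of_nonneg_initial {T : ℝ} (hX : IsDyadicSolutionOn C k X (Ico 0 T)) {n : ℕ}
    (hn : 1 ≤ n) (h0 : 0 ≤ X n 0) {t : ℝ} (ht : t ∈ Ico 0 T) : 0 ≤ X n t := by
  have hsub : Icc 0 t ⊆ Ico 0 T := Icc_subset_Ico_right ht.2
  refine nonneg_of_hasDerivWithinAt_add_mul_nonneg (q := fun x => k n * X (n + 1) x) ht.1
    ((continuousOn_const.mul (hX.continuousOn (Nat.le_add_left 1 n))).mono hsub)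
    (fun _ hx => (hX.hasDerivWithinAt hn (hsub hx)).mono hsub) (fun x _ => ?_) h0
  calc (0 : ℝ) ≤ k (n - 1) * X (n - 1) x ^ 2 := mul_nonneg (hX.coeff_nonneg _) (sq_nonneg _)
    _ = _ := by ring

end IsDyadicSolutionOn

theorem Hplus_initial_implies_LerayHopf_general
    (C : ℝ) (k : ℕ → ℝ) (X : ℕ → ℝ → ℝ) (T : ℝ)
    (hX : IsDyadicSolutionOn C k X (Set.Ico 0 T))
    (hfin : {n : ℕ | X n 0 < 0}.Finite) :
    ∀ s ∈ Set.Ico (0 : ℝ) T, ∀ t ∈ Set.Ico (0 : ℝ) T, s < t →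
      energy X t ≤ energy X s := by
  have hpos : ∀ᶠ n in atTop, ∀ t ∈ Ico (0 : ℝ) T, 0 ≤ X n t := by
    filter_upwards [Nat.cofinite_eq_atTop ▸ hfin.eventually_cofinite_notMem,
      eventually_ge_atTop 1] with n hn hn1 t ht
    exact hX.nonneg_of_nonneg_initial hn1 (not_lt.1 hn) ht
  exact fun s hs t ht hst => hX.antitoneOn_energy (convex_Ico 0 T) hpos hs ht hst.le

/-- every solution with initial condition in `H₊` is a
Leray-Hopf solution. -/
theorem Hplus_initial_implies_LerayHopf
    (C : ℝ) (k : ℕ → ℝ) (X : ℕ → ℝ → ℝ) (T : ℝ) (hT : 0 < T)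
    (hX : IsDyadicSolutionOn C k X (Set.Ico 0 T))
    (hfin : {n : ℕ | X n 0 < 0}.Finite) :
    ∀ s ∈ Set.Ico (0 : ℝ) T, ∀ t ∈ Set.Ico (0 : ℝ) T, s < t →
      energy X t ≤ energy X s :=
  Hplus_initial_implies_LerayHopf_general C k X T hX hfin
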